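/- arXiv:1610.07834 — 3 statements merged into one kernel-verified Lean document; each statement's English description precedes it below -/
import Mathlib

section
/- Let k ≥ 3 and let ρ and σ be two distinct h-ary central relations on E_k (h ≥ 2). If Pol{ρ,σ} is maximal in Pol ρ, then ρ and σ are comparable, i.e., ρ ⊊ σ or σ ⊊ ρ (σ is of type III). -/
/-- The set of finitary operations on `Fin k` (all arities). -/
abbrev Op (k : ℕ) := Σ n : ℕ, ((Fin n → Fin k) → Fin k)

/-- An `n`-ary operation `f` preserves an `h`-ary relation `ρ`. -/
def Preserves {k n h : ℕ} (f : (Fin n → Fin k) → Fin k)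
    (ρ : Set (Fin h → Fin k)) : Prop :=
  ∀ a : Fin h → Fin n → Fin k,
    (∀ i : Fin n, (fun j => a j i) ∈ ρ) → (fun j => f (a j)) ∈ ρ

/-- An `n`-ary operation preserves a unary relation (a subset of `Fin k`). -/
def PreservesU {k n : ℕ} (f : (Fin n → Fin k) → Fin k) (σ : Set (Fin k)) : Prop :=
  ∀ x : Fin n → Fin k, (∀ i, x i ∈ σ) → f x ∈ σ

/-- `Pol ρ` for a single `h`-ary relation. -/
def Pol1 {k h : ℕ} (ρ : Set (Fin h → Fin k)) : Set (Op k) :=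
  {f | Preserves f.2 ρ}

/-- `Pol {ρ, σ}` for two relations of possibly different arities. -/
def Pol2 {k h s : ℕ} (ρ : Set (Fin h → Fin k)) (σ : Set (Fin s → Fin k)) : Set (Op k) :=
  Pol1 ρ ∩ Pol1 σ

/-- `Pol σ` for a unary relation. -/
def PolU {k : ℕ} (σ : Set (Fin k)) : Set (Op k) :=
  {f | PreservesU f.2 σ}

/-- A clone: contains all projections and is closed under composition. -/
structure IsClone (k : ℕ) (C : Set (Op k)) : Prop where
  proj : ∀ (n : ℕ) (i : Fin n), (⟨n, fun x => x i⟩ : Op k) ∈ C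
  comp : ∀ (n m : ℕ) (g : (Fin m → Fin k) → Fin k)
      (f : Fin m → (Fin n → Fin k) → Fin k),
      (⟨m, g⟩ : Op k) ∈ C → (∀ i, (⟨n, f i⟩ : Op k) ∈ C) →
      (⟨n, fun x => g fun i => f i x⟩ : Op k) ∈ C

/-- `C` is maximal in `D`: `C ⊊ D` and no clone lies strictly between them. -/
def MaximalIn {k : ℕ} (C D : Set (Op k)) : Prop :=
  C ⊂ D ∧ ∀ E : Set (Op k), IsClone k E → ¬(C ⊂ E ∧ E ⊂ D)

/-- The clone generated by a set `F` of operations. -/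
def CloneGen (k : ℕ) (F : Set (Op k)) : Set (Op k) :=
  ⋂₀ {C : Set (Op k) | IsClone k C ∧ F ⊆ C}

/-- Totally reflexive: contains every tuple with a repeated entry. -/
def TotallyReflexive {k h : ℕ} (ρ : Set (Fin h → Fin k)) : Prop :=
  ∀ a : Fin h → Fin k, (∃ i j : Fin h, i ≠ j ∧ a i = a j) → a ∈ ρ

/-- Totally symmetric: invariant under all permutations of coordinates. -/
def TotallySymmetric {k h : ℕ} (ρ : Set (Fin h → Fin k)) : Prop :=
  ∀ a ∈ ρ, ∀ π : Equiv.Perm (Fin h), (a ∘ π) ∈ ρ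

/-- The center of an `h`-ary relation: those `c` such that every tuple whose
first coordinate is `c` belongs to the relation. -/
def Center {k h : ℕ} (ρ : Set (Fin h → Fin k)) : Set (Fin k) :=
  {c | ∀ a : Fin h → Fin k, (∀ i : Fin h, (i : ℕ) = 0 → a i = c) → a ∈ ρ}

/-- A central relation: totally reflexive, totally symmetric, with nonempty
proper center. -/
def IsCentralRel {k h : ℕ} (ρ : Set (Fin h → Fin k)) : Prop :=
  TotallyReflexive ρ ∧ TotallySymmetric ρ ∧ (Center ρ).Nonempty ∧ Center ρ ≠ Set.univ

/-- A unary central relation: a nonempty proper subset of `Fin k`. -/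
def IsCentralU {k : ℕ} (σ : Set (Fin k)) : Prop :=
  σ.Nonempty ∧ σ ≠ Set.univ

/-- `B` is a `ρ`-chain: `B^h ⊆ ρ`. -/
def RhoChain {k h : ℕ} (ρ : Set (Fin h → Fin k)) (B : Set (Fin k)) : Prop :=
  ∀ a : Fin h → Fin k, (∀ i, a i ∈ B) → a ∈ ρ

/-- A maximal `ρ`-chain. -/
def MaxRhoChain {k h : ℕ} (ρ : Set (Fin h → Fin k)) (B : Set (Fin k)) : Prop :=
  RhoChain ρ B ∧ ∀ D : Set (Fin k), RhoChain ρ D → B ⊆ D → B = D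

/-- The arity-`h` tuple `(a, b, …, b)`; for `h = 2` this is the pair `(a, b)`. -/
def pair2 {k : ℕ} (h : ℕ) (a b : Fin k) : Fin h → Fin k :=
  fun i => if (i : ℕ) = 0 then a else b

/-- Recasting an `s`-ary relation along an arity equality `s = h`. -/
def recast {k s h : ℕ} (e : s = h) (σ : Set (Fin s → Fin k)) :
    Set (Fin h → Fin k) :=
  {a | (fun i : Fin s => a (Fin.cast e i)) ∈ σ}

/-- Type I: `σ` is unary and `C_ρ ∩ σ ≠ ∅`. -/
def TypeI {k h s : ℕ} (ρ : Set (Fin h → Fin k)) (σ : Set (Fin s → Fin k)) : Prop :=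
  s = 1 ∧ (Center ρ ∩ Center σ).Nonempty

/-- Type II: `σ` unary, `h = 2`, `ρ = {(a,b) : ∃ u ∈ σ, (a,u) ∈ ρ ∧ (b,u) ∈ ρ}`,
and every maximal `ρ`-chain meets `σ`. -/
def TypeII {k h s : ℕ} (ρ : Set (Fin h → Fin k)) (σ : Set (Fin s → Fin k)) : Prop :=
  s = 1 ∧ h = 2 ∧
  (∀ a b : Fin k, pair2 h a b ∈ ρ ↔
      ∃ u ∈ Center σ, pair2 h a u ∈ ρ ∧ pair2 h b u ∈ ρ) ∧
  ∀ B : Set (Fin k), MaxRhoChain ρ B → (B ∩ Center σ).Nonempty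

/-- Type III: `s = h` and `ρ`, `σ` are comparable. -/
def TypeIII {k h s : ℕ} (ρ : Set (Fin h → Fin k)) (σ : Set (Fin s → Fin k)) : Prop :=
  ∃ e : s = h, recast e σ ⊂ ρ ∨ ρ ⊂ recast e σ

/-- Type IV: `2 ≤ s < h` and `C_ρ ∩ C_σ ≠ ∅`. -/
def TypeIV {k h s : ℕ} (ρ : Set (Fin h → Fin k)) (σ : Set (Fin s → Fin k)) : Prop :=
  2 ≤ s ∧ s < h ∧ (Center ρ ∩ Center σ).Nonempty

/-- Type V: `2 ≤ h < s` and `λ ⊊ σ`, where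
`λ = {(a_1,…,a_s) : (a_1,…,a_h) ∈ ρ}`. -/
def TypeV {k h s : ℕ} (ρ : Set (Fin h → Fin k)) (σ : Set (Fin s → Fin k)) : Prop :=
  2 ≤ h ∧ ∃ hlt : h < s,
    {a : Fin s → Fin k | (fun i : Fin h => a (Fin.castLE hlt.le i)) ∈ ρ} ⊂ σ

/-- Type I for a unary relation given as a subset of `Fin k`. -/
def TypeIU {k h : ℕ} (ρ : Set (Fin h → Fin k)) (σ : Set (Fin k)) : Prop :=
  (Center ρ ∩ σ).Nonempty

/-- Type II for a unary relation given as a subset of `Fin k`. -/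
def TypeIIU {k h : ℕ} (ρ : Set (Fin h → Fin k)) (σ : Set (Fin k)) : Prop :=
  h = 2 ∧
  (∀ a b : Fin k, pair2 h a b ∈ ρ ↔
      ∃ u ∈ σ, pair2 h a u ∈ ρ ∧ pair2 h b u ∈ ρ) ∧
  ∀ B : Set (Fin k), MaxRhoChain ρ B → (B ∩ σ).Nonempty

namespace CompMaxAux

variable {k h : ℕ}

/-- The unary operation determined by `F : Fin k → Fin k`. -/
def uop (k : ℕ) (F : Fin k → Fin k) : Op k :=
  ⟨1, fun x => F (x 0)⟩

lemma uop_mem_Pol1 {F : Fin k → Fin k} {ρ : Set (Fin h → Fin k)}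
    (hF : ∀ t ∈ ρ, (fun j => F (t j)) ∈ ρ) : uop k F ∈ Pol1 ρ := by
  show Preserves (fun x : Fin 1 → Fin k => F (x 0)) ρ
  intro A hA
  exact hF (fun j => A j 0) (hA 0)

lemma uop_not_mem_Pol1 {F : Fin k → Fin k} {σ : Set (Fin h → Fin k)}
    {t : Fin h → Fin k} (ht : t ∈ σ) (hft : (fun j => F (t j)) ∉ σ) :
    uop k F ∉ Pol1 σ := by
  intro hp
  have hp' : Preserves (fun x : Fin 1 → Fin k => F (x 0)) σ := hp
  exact hft (hp' (fun j _ => t j) (fun _ => ht))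

lemma center_mem {ρ : Set (Fin h → Fin k)} (hρ : IsCentralRel ρ) {c : Fin k}
    (hc : c ∈ Center ρ) {t : Fin h → Fin k} {i : Fin h} (hti : t i = c) : t ∈ ρ := by
  have hpos : 0 < h := i.pos
  set π : Equiv.Perm (Fin h) := Equiv.swap ⟨0, hpos⟩ i with hπ
  have h1 : (t ∘ π) ∈ ρ := by
    apply hc
    intro j hj
    have hj0 : j = ⟨0, hpos⟩ := Fin.ext hj
    subst hj0
    simp only [Function.comp_apply, hπ, Equiv.swap_apply_left, hti]
  have h2 := hρ.2.1 _ h1 π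
  have h3 : ((t ∘ π) ∘ π) = t := by
    funext j
    simp [hπ, Equiv.swap_apply_self]
  rwa [h3] at h2

lemma not_mem_inj {ρ : Set (Fin h → Fin k)} (hρ : IsCentralRel ρ)
    {t : Fin h → Fin k} (ht : t ∉ ρ) : Function.Injective t := by
  intro x y hxy
  by_contra hne
  exact ht (hρ.1 t ⟨x, y, hne, hxy⟩)

lemma not_mem_avoid {ρ : Set (Fin h → Fin k)} (hρ : IsCentralRel ρ)
    {t : Fin h → Fin k} (ht : t ∉ ρ) (i : Fin h) : t i ∉ Center ρ :=
  fun hc => ht (center_mem hρ hc rfl)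

lemma mem_iff_of_range_subset {ρ : Set (Fin h → Fin k)} (hρ : IsCentralRel ρ)
    {t t' : Fin h → Fin k} (ht : Function.Injective t) (ht' : Function.Injective t')
    (hr : Set.range t' ⊆ Set.range t) : t ∈ ρ ↔ t' ∈ ρ := by
  choose ι hι using fun j => hr (Set.mem_range_self j)
  have hinj : Function.Injective ι := by
    intro a b hab
    apply ht'
    rw [← hι a, ← hι b, hab]
  have hbij := Finite.injective_iff_bijective.mp hinj
  set π := Equiv.ofBijective ι hbij with hπdef
  have hcomp : (t ∘ π) = t' := funext fun j => hι j
  constructor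
  · intro htρ
    rw [← hcomp]
    exact hρ.2.1 t htρ π
  · intro ht'ρ
    have h2 := hρ.2.1 t' ht'ρ π.symm
    have he : (t' ∘ π.symm) = t := by
      funext j
      rw [← hcomp]
      simp only [Function.comp_apply, Equiv.apply_symm_apply]
    rwa [he] at h2

/-- The map sending `a i ↦ b i` and everything else to `d`. -/
noncomputable def mapTo (a b : Fin h → Fin k) (d : Fin k) : Fin k → Fin k :=
  fun x => if hx : ∃ i, a i = x then b hx.choose else d

lemma mapTo_apply {a b : Fin h → Fin k} {d : Fin k} (ha : Function.Injective a)
    (i : Fin h) : mapTo a b d (a i) = b i := by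
  have hx : ∃ j, a j = a i := ⟨i, rfl⟩
  simp only [mapTo, dif_pos hx]
  congr 1
  exact ha hx.choose_spec

lemma mapTo_cases (a b : Fin h → Fin k) (d : Fin k) (x : Fin k) :
    (∃ i, mapTo a b d x = b i) ∨ mapTo a b d x = d := by
  unfold mapTo
  by_cases hx : ∃ i, a i = x
  · exact Or.inl ⟨hx.choose, by rw [dif_pos hx]⟩
  · exact Or.inr (dif_neg hx)

lemma mapTo_ne_default {a b : Fin h → Fin k} {d x : Fin k}
    (hx : mapTo a b d x ≠ d) : ∃ i, a i = x := by
  by_contra hn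
  exact hx (dif_neg hn)


lemma exists_inj_prescribed (hhk : h ≤ k) (hh : 2 ≤ h) {x y : Fin k} (hxy : x ≠ y) :
    ∃ w : Fin h → Fin k, Function.Injective w ∧
      w ⟨0, by omega⟩ = x ∧ w ⟨1, by omega⟩ = y := by
  set base : Fin h → Fin k := Fin.castLE hhk with hbasedef
  have hbase : Function.Injective base := Fin.castLE_injective hhk
  set x₀ : Fin k := base ⟨0, by omega⟩ with hx₀
  set x₁ : Fin k := base ⟨1, by omega⟩ with hx₁
  have hx01 : x₀ ≠ x₁ := by
    intro he
    have := hbase he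
    simp [Fin.ext_iff] at this
  set P₁ : Equiv.Perm (Fin k) := Equiv.swap x₀ x with hP₁
  have h1 : P₁ x₀ = x := Equiv.swap_apply_left _ _
  set y' : Fin k := P₁ x₁ with hy'
  have hy'x : y' ≠ x := by
    intro he
    exact hx01 (P₁.injective (by rw [h1, ← he]))
  rcases eq_or_ne y' y with hyy | hyy
  · exact ⟨fun i => P₁ (base i), P₁.injective.comp hbase, h1, hyy⟩
  · set P₂ : Equiv.Perm (Fin k) := Equiv.swap y' y with hP₂
    refine ⟨fun i => P₂ (P₁ (base i)), P₂.injective.comp (P₁.injective.comp hbase), ?_, ?_⟩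
    · show P₂ (P₁ x₀) = x
      rw [h1, hP₂, Equiv.swap_apply_of_ne_of_ne (Ne.symm hy'x) hxy]
    · show P₂ (P₁ x₁) = y
      rw [← hy', hP₂, Equiv.swap_apply_left]

lemma isClone_Pol1 (ρ : Set (Fin h → Fin k)) : IsClone k (Pol1 ρ) where
  proj := fun n i A hA => hA i
  comp := fun n m g f hg hf A hA => hg (fun j i => f i (A j)) (fun i => hf i A hA)

lemma isClone_inter {C D : Set (Op k)} (hC : IsClone k C) (hD : IsClone k D) :
    IsClone k (C ∩ D) where
  proj := fun n i => ⟨hC.proj n i, hD.proj n i⟩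
  comp := fun n m g f hg hf =>
    ⟨hC.comp n m g f hg.1 (fun i => (hf i).1), hD.comp n m g f hg.2 (fun i => (hf i).2)⟩


/-- Key combinatorial lemma: if `ρ`, `σ` are incomparable central relations,
there is a unary map preserving `ρ` and `ρ ∩ σ` but not `σ`. -/
lemma exists_mid_breaker {ρ σ : Set (Fin h → Fin k)} (hh : 2 ≤ h)
    (hρ : IsCentralRel ρ) (hσ : IsCentralRel σ)
    {a : Fin h → Fin k} (haσ : a ∈ σ) (haρ : a ∉ ρ)
    {b : Fin h → Fin k} (hbρ : b ∈ ρ) (hbσ : b ∉ σ) :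
    ∃ F : Fin k → Fin k,
      (∀ t ∈ ρ, (fun j => F (t j)) ∈ ρ) ∧
      (∀ t ∈ ρ ∩ σ, (fun j => F (t j)) ∈ ρ ∩ σ) ∧
      ∃ t ∈ σ, (fun j => F (t j)) ∉ σ := by
  classical
  have hainj : Function.Injective a := not_mem_inj hρ haρ
  by_cases P : ∃ d ∈ Center σ, ∃ b' : Fin h → Fin k, b' ∉ σ ∧
      ∀ i, Function.update b' i d ∈ ρ
  · -- Case (i)
    obtain ⟨d, hdσ, b', hb'σ, hP⟩ := P
    have hb'inj : Function.Injective b' := not_mem_inj hσ hb'σ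
    have hdb' : ∀ i, b' i ≠ d := fun i he => not_mem_avoid hσ hb'σ i (he ▸ hdσ)
    set F : Fin k → Fin k := mapTo a b' d with hFdef
    -- ρ-preservation
    have presρ : ∀ t ∈ ρ, (fun j => F (t j)) ∈ ρ := by
      intro t htρ
      by_contra hFt
      have hinj : Function.Injective (fun j => F (t j)) := not_mem_inj hρ hFt
      by_cases hcaseA : ∃ j₀, F (t j₀) = d
      · obtain ⟨j₀, hj₀⟩ := hcaseA
        -- find an index m of b' not hit by F ∘ t
        have hm : ∃ m : Fin h, ∀ j, F (t j) ≠ b' m := by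
          by_contra hall
          push_neg at hall
          -- then image of b' ⊆ image of F ∘ t, both have card h, but d is in the
          -- latter and not the former
          have hsub : Finset.image b' Finset.univ ⊆
              Finset.image (fun j => F (t j)) Finset.univ := by
            intro x hx
            simp only [Finset.mem_image, Finset.mem_univ, true_and] at hx ⊢
            obtain ⟨m, rfl⟩ := hx
            obtain ⟨j, hj⟩ := hall m
            exact ⟨j, hj⟩
          have hcard : (Finset.image (fun j => F (t j)) Finset.univ).card ≤
              (Finset.image b' Finset.univ).card := by
            rw [Finset.card_image_of_injective _ hb'inj,
              Finset.card_image_of_injective _ hinj]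
          have heq := Finset.eq_of_subset_of_card_le hsub hcard
          have hdmem : d ∈ Finset.image (fun j => F (t j)) Finset.univ := by
            simp only [Finset.mem_image, Finset.mem_univ, true_and]
            exact ⟨j₀, hj₀⟩
          rw [← heq] at hdmem
          simp only [Finset.mem_image, Finset.mem_univ, true_and] at hdmem
          obtain ⟨m, hm⟩ := hdmem
          exact hdb' m hm
        obtain ⟨m, hm⟩ := hm
        have hupd_inj : Function.Injective (Function.update b' m d) := by
          intro x y hxy
          by_cases hx : x = m <;> by_cases hy : y = m
          · rw [hx, hy]
          · rw [hx, Function.update_self, Function.update_of_ne hy] at hxy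
            exact absurd hxy.symm (hdb' y)
          · rw [hy, Function.update_self, Function.update_of_ne hx] at hxy
            exact absurd hxy (hdb' x)
          · rw [Function.update_of_ne hx, Function.update_of_ne hy] at hxy
            exact hb'inj hxy
        have hsub : Set.range (fun j => F (t j)) ⊆
            Set.range (Function.update b' m d) := by
          rintro _ ⟨j, rfl⟩
          rcases mapTo_cases a b' d (t j) with ⟨i, hi⟩ | hd'
          · have him : i ≠ m := by
              intro he
              exact hm j (he ▸ hi)
            exact ⟨i, by rw [Function.update_of_ne him]; exact hi.symm⟩
          · exact ⟨m, by rw [Function.update_self]; exact hd'.symm⟩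
        exact hFt ((mem_iff_of_range_subset hρ hupd_inj hinj hsub).mp (hP m))
      · push_neg at hcaseA
        have htinj : Function.Injective t := by
          intro x y he
          exact hinj (by simp only [he])
        have hsub : Set.range t ⊆ Set.range a := by
          rintro _ ⟨j, rfl⟩
          exact mapTo_ne_default (hcaseA j)
        exact haρ ((mem_iff_of_range_subset hρ hainj htinj hsub).mpr htρ)
    refine ⟨F, presρ, ?_, ⟨a, haσ, ?_⟩⟩
    · -- θ-preservation
      rintro t ⟨htρ, htσ⟩
      refine ⟨presρ t htρ, ?_⟩
      by_contra hFtσ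
      have hinj : Function.Injective (fun j => F (t j)) := not_mem_inj hσ hFtσ
      have hnod : ∀ j, F (t j) ≠ d :=
        fun j he => not_mem_avoid hσ hFtσ j (he ▸ hdσ)
      have htinj : Function.Injective t := by
        intro x y he
        exact hinj (by simp only [he])
      have hsub : Set.range t ⊆ Set.range a := by
        rintro _ ⟨j, rfl⟩
        exact mapTo_ne_default (hnod j)
      exact haρ ((mem_iff_of_range_subset hρ hainj htinj hsub).mpr htρ)
    · -- breaks σ
      have : (fun j => F (a j)) = b' := funext fun j => mapTo_apply hainj j
      rw [this]
      exact hb'σ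
  · -- Case (ii)
    push_neg at P
    obtain ⟨c, hc⟩ := hρ.2.2.1
    obtain ⟨d, hd⟩ := hσ.2.2.1
    have hcns : c ∉ Center σ := by
      intro hcs
      obtain ⟨i, hi⟩ := P c hcs b hbσ
      exact hi (center_mem hρ hc (Function.update_self i c b))
    have hcd : c ≠ d := fun he => hcns (he ▸ hd)
    -- get u ∉ σ with u ⟨0,_⟩ = c
    have hpos : 0 < h := by omega
    obtain ⟨u, hu0, huσ⟩ : ∃ u : Fin h → Fin k, u ⟨0, hpos⟩ = c ∧ u ∉ σ := by
      simp only [Center, Set.mem_setOf_eq, not_forall] at hcns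
      obtain ⟨u, hu, huσ⟩ := hcns
      exact ⟨u, hu ⟨0, hpos⟩ rfl, huσ⟩
    -- key replacement fact
    have M1 : ∀ v : Fin h → Fin k, v ∉ σ → ∀ i₀, v i₀ = c →
        Function.update v i₀ d ∉ ρ := by
      intro v hv i₀ hvc
      obtain ⟨i, hi⟩ := P d hd v hv
      have hii : i = i₀ := by
        by_contra hne
        apply hi
        apply center_mem hρ hc (i := i₀)
        rw [Function.update_of_ne (Ne.symm hne), hvc]
      rwa [hii] at hi
    set F : Fin k → Fin k := fun x => if x = d then c else x with hFdef
    have presρ : ∀ t ∈ ρ, (fun j => F (t j)) ∈ ρ := by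
      intro t htρ
      by_contra hFt
      have havoid := not_mem_avoid hρ hFt
      have heq : (fun j => F (t j)) = t := by
        funext j
        have hne : F (t j) ≠ c := fun he => havoid j (he ▸ hc)
        by_cases hjd : t j = d
        · exact absurd (by simp [hFdef, hjd]) hne
        · simp [hFdef, hjd]
      rw [heq] at hFt
      exact hFt htρ
    refine ⟨F, presρ, ?_, ?_⟩
    · rintro t ⟨htρ, htσ⟩
      refine ⟨presρ t htρ, ?_⟩
      by_contra hFtσ
      have hinj : Function.Injective (fun j => F (t j)) := not_mem_inj hσ hFtσ
      have hnod : ∀ j, F (t j) ≠ d :=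
        fun j he => not_mem_avoid hσ hFtσ j (he ▸ hd)
      by_cases hex : ∃ j₀, t j₀ = d
      · obtain ⟨j₀, hj₀⟩ := hex
        have hFj₀ : F (t j₀) = c := by simp [hFdef, hj₀]
        have hothers : ∀ j, j ≠ j₀ → t j ≠ d := by
          intro j hj he
          apply hj
          apply hinj
          show F (t j) = F (t j₀)
          rw [hFj₀]
          simp [hFdef, he]
        have hs_eq : (fun j => F (t j)) = Function.update t j₀ c := by
          funext j
          by_cases hjj : j = j₀
          · subst hjj
            rw [Function.update_self, hFj₀]
          · rw [Function.update_of_ne hjj]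
            simp [hFdef, hothers j hjj]
        have hupdσ : Function.update t j₀ c ∉ σ := by
          rw [← hs_eq]
          exact hFtσ
        have := M1 (Function.update t j₀ c) hupdσ j₀ (Function.update_self j₀ c t)
        apply this
        have heq2 : Function.update (Function.update t j₀ c) j₀ d = t := by
          rw [Function.update_idem, ← hj₀, Function.update_eq_self]
        rw [heq2]
        exact htρ
      · push_neg at hex
        have heq : (fun j => F (t j)) = t := by
          funext j
          simp [hFdef, hex j]
        rw [heq] at hFtσ
        exact hFtσ htσ
    · -- breaks σ
      refine ⟨Function.update u ⟨0, hpos⟩ d, ?_, ?_⟩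
      · exact center_mem hσ hd (i := ⟨0, hpos⟩) (Function.update_self _ _ _)
      · have heq : (fun j => F (Function.update u ⟨0, hpos⟩ d j)) = u := by
          funext j
          by_cases hj : j = (⟨0, hpos⟩ : Fin h)
          · subst hj
            rw [Function.update_self]
            simp [hFdef, hu0]
          · rw [Function.update_of_ne hj]
            have : u j ≠ d := fun he => not_mem_avoid hσ huσ j (he ▸ hd)
            simp [hFdef, this]
        rw [heq]
        exact huσ


/-- A unary map preserving `ρ` but not `ρ ∩ σ`. -/
lemma exists_upper_breaker {ρ σ : Set (Fin h → Fin k)} (hh : 2 ≤ h)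
    (hρ : IsCentralRel ρ) (hσ : IsCentralRel σ)
    {b : Fin h → Fin k} (hbρ : b ∈ ρ) (hbσ : b ∉ σ) :
    ∃ G : Fin k → Fin k,
      (∀ t ∈ ρ, (fun j => G (t j)) ∈ ρ) ∧
      ∃ t ∈ ρ ∩ σ, (fun j => G (t j)) ∉ ρ ∩ σ := by
  classical
  have hbinj : Function.Injective b := not_mem_inj hσ hbσ
  have hhk : h ≤ k := by simpa using Fintype.card_le_of_injective b hbinj
  obtain ⟨c, hc⟩ := hρ.2.2.1
  obtain ⟨d, hd⟩ := hσ.2.2.1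
  have hpos : 0 < h := by omega
  -- get w injective, in ρ ∩ σ
  obtain ⟨w, hwinj, hwρ, hwσ⟩ :
      ∃ w : Fin h → Fin k, Function.Injective w ∧ w ∈ ρ ∧ w ∈ σ := by
    rcases eq_or_ne c d with hcd | hcd
    · have hk2 : 2 ≤ k := by omega
      obtain ⟨y, hy⟩ : ∃ y : Fin k, y ≠ c := by
        rcases eq_or_ne c ⟨0, by omega⟩ with h0 | h0
        · exact ⟨⟨1, by omega⟩, by rw [h0]; simp [Fin.ext_iff]⟩
        · exact ⟨⟨0, by omega⟩, Ne.symm h0⟩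
      obtain ⟨w, hwinj, hw0, _⟩ := exists_inj_prescribed hhk hh (Ne.symm hy)
      refine ⟨w, hwinj, center_mem hρ hc hw0, center_mem hσ (hcd ▸ hd) hw0⟩
    · obtain ⟨w, hwinj, hw0, hw1⟩ := exists_inj_prescribed hhk hh hcd
      exact ⟨w, hwinj, center_mem hρ hc hw0, center_mem hσ hd hw1⟩
  set G : Fin k → Fin k := mapTo w b c with hGdef
  refine ⟨G, ?_, ⟨w, ⟨hwρ, hwσ⟩, ?_⟩⟩
  · intro t htρ
    by_contra hGt
    have hinj : Function.Injective (fun j => G (t j)) := not_mem_inj hρ hGt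
    have hsub : Set.range (fun j => G (t j)) ⊆ Set.range b := by
      rintro _ ⟨j, rfl⟩
      rcases mapTo_cases w b c (t j) with ⟨i, hi⟩ | hc'
      · exact ⟨i, hi.symm⟩
      · exact (hGt (center_mem hρ hc (t := fun j' => G (t j')) (i := j) hc')).elim
    exact hGt ((mem_iff_of_range_subset hρ hbinj hinj hsub).mp hbρ)
  · have heq : (fun j => G (w j)) = b := funext fun j => mapTo_apply hwinj j
    rw [heq]
    exact fun hmem => hbσ hmem.2

end CompMaxAux

/-- Proposition 3 — for equal arities, maximality forces
comparability. -/
theorem comparable_of_maximal {k h : ℕ} (hk : 3 ≤ k) (hh : 2 ≤ h)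
    (ρ σ : Set (Fin h → Fin k))
    (hρ : IsCentralRel ρ) (hσ : IsCentralRel σ) (hne : ρ ≠ σ)
    (hmax : MaximalIn (Pol2 ρ σ) (Pol1 ρ)) :
    ρ ⊂ σ ∨ σ ⊂ ρ := by
  by_contra hcon
  push_neg at hcon
  obtain ⟨hc1, hc2⟩ := hcon
  have hρσ : ¬ ρ ⊆ σ := fun hs => hc1 (Set.ssubset_iff_subset_ne.mpr ⟨hs, hne⟩)
  have hσρ : ¬ σ ⊆ ρ := fun hs => hc2 (Set.ssubset_iff_subset_ne.mpr ⟨hs, hne.symm⟩)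
  obtain ⟨b, hbρ, hbσ⟩ := Set.not_subset.mp hρσ
  obtain ⟨a, haσ, haρ⟩ := Set.not_subset.mp hσρ
  obtain ⟨F, hF1, hF2, t₀, ht₀σ, ht₀F⟩ :=
    CompMaxAux.exists_mid_breaker hh hρ hσ haσ haρ hbρ hbσ
  obtain ⟨G, hG1, t₁, ht₁, ht₁G⟩ :=
    CompMaxAux.exists_upper_breaker hh hρ hσ hbρ hbσ
  set E : Set (Op k) := Pol2 ρ (ρ ∩ σ) with hE
  have hclone : IsClone k E :=
    CompMaxAux.isClone_inter (CompMaxAux.isClone_Pol1 ρ) (CompMaxAux.isClone_Pol1 (ρ ∩ σ))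
  have hsub1 : Pol2 ρ σ ⊆ E := by
    rintro p ⟨pρ, pσ⟩
    refine ⟨pρ, ?_⟩
    intro A hA
    exact ⟨pρ A (fun i => (hA i).1), pσ A (fun i => (hA i).2)⟩
  have hfE : CompMaxAux.uop k F ∈ E :=
    ⟨CompMaxAux.uop_mem_Pol1 hF1, CompMaxAux.uop_mem_Pol1 hF2⟩
  have hfσ : CompMaxAux.uop k F ∉ Pol1 σ := CompMaxAux.uop_not_mem_Pol1 ht₀σ ht₀F
  have hgρ : CompMaxAux.uop k G ∈ Pol1 ρ := CompMaxAux.uop_mem_Pol1 hG1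
  have hgθ : CompMaxAux.uop k G ∉ Pol1 (ρ ∩ σ) := CompMaxAux.uop_not_mem_Pol1 ht₁ ht₁G
  apply hmax.2 E hclone
  constructor
  · rw [Set.ssubset_def]
    exact ⟨hsub1, fun hsub => hfσ (hsub hfE).2⟩
  · rw [Set.ssubset_def]
    exact ⟨fun p hp => hp.1, fun hsub => hgθ (hsub hgρ).2⟩
end

section
/- Let k ≥ 3, let ρ and σ be two distinct h-ary central relations on E_k (h ≥ 2) with ρ ∩ σ ∉ {ρ, σ}. Let γ = ρ ∩ σ and γ₁ = {(x_1,…,x_h) ∈ E_k^h : ∃u ∈ E_k such that (x_1,…,x_{i−1},u,x_{i+1},…,x_h) ∈ γ for all 1 ≤ i ≤ h}. If Pol{ρ,σ} is maximal in Pol ρ, then γ ≠ γ₁ ∩ ρ. -/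
/-!
Suppose `γ = γ₁ ∩ ρ`. A common central element of `ρ` and `σ` makes `γ₁` the full relation,
forcing `γ = ρ`. Otherwise pick `c ∈ C_ρ \ C_σ` and `a ∈ C_σ`: the clone `Pol {ρ, γ}` lies strictly
between `Pol {ρ, σ}` and `Pol ρ`. The unary map sending `a` to `c` and fixing everything else
preserves `ρ`, and `γ` because `γ ⊇ γ₁ ∩ ρ`, but not `σ` since `c ∉ C_σ`. For an injective tuple
`b ∈ γ` and some `x ∈ ρ \ σ`, the unary map sending `b` to `x` and everything else to `c` preserves
`ρ` but not `γ`.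
-/

open Function

section Relations

variable {k h : ℕ}

def gammaOne (γ : Set (Fin h → Fin k)) : Set (Fin h → Fin k) :=
  {x | ∃ u : Fin k, ∀ i : Fin h, update x i u ∈ γ}

theorem TotallySymmetric.mem_of_apply_mem_center {ρ : Set (Fin h → Fin k)}
    (hsym : TotallySymmetric ρ) {a : Fin h → Fin k} (j : Fin h) (hj : a j ∈ Center ρ) :
    a ∈ ρ := by
  let i₀ : Fin h := ⟨0, j.pos⟩
  have hswap : a ∘ Equiv.swap i₀ j ∈ ρ := hj _ fun i hi => by
    rw [show i = i₀ from Fin.ext hi, comp_apply, Equiv.swap_apply_left]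
  convert hsym _ hswap (Equiv.swap i₀ j) using 1
  ext i
  simp

theorem TotallySymmetric.inter {ρ σ : Set (Fin h → Fin k)} (hρ : TotallySymmetric ρ)
    (hσ : TotallySymmetric σ) : TotallySymmetric (ρ ∩ σ) :=
  fun a ha π => ⟨hρ a ha.1 π, hσ a ha.2 π⟩

theorem center_inter (ρ σ : Set (Fin h → Fin k)) :
    Center (ρ ∩ σ) = Center ρ ∩ Center σ := by
  ext c
  simp only [Center, Set.mem_inter_iff, Set.mem_ofPred_eq, imp_and, forall_and]

theorem TotallyReflexive.injective_of_notMem {ρ : Set (Fin h → Fin k)}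
    (hrefl : TotallyReflexive ρ) {x : Fin h → Fin k} (hx : x ∉ ρ) : Injective x := by
  intro i j hij
  by_contra hne
  exact hx (hrefl x ⟨i, j, hne, hij⟩)

theorem gammaOne_eq_univ {γ : Set (Fin h → Fin k)} (hsym : TotallySymmetric γ) {c : Fin k}
    (hc : c ∈ Center γ) : gammaOne γ = Set.univ :=
  Set.eq_univ_of_forall fun x =>
    ⟨c, fun i => hsym.mem_of_apply_mem_center i (by rwa [update_self])⟩

end Relations

theorem exists_injective_fin_of_card_le {α : Type*} [Fintype α] [LinearOrder α] {n : ℕ}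
    (s : Finset α) (hs : s.card ≤ n) (hn : n ≤ Fintype.card α) :
    ∃ b : Fin n → α, Injective b ∧ ∀ y ∈ s, ∃ i, b i = y := by
  obtain ⟨t, hst, rfl⟩ := Finset.exists_superset_card_eq hs hn
  refine ⟨t.orderEmbOfFin rfl, (t.orderEmbOfFin rfl).injective, fun y hy => ?_⟩
  rw [← Set.mem_range, Finset.range_orderEmbOfFin]
  exact hst hy

theorem exists_perm_eq_comp_of_range_subset {α : Type*} {n : ℕ} {b t : Fin n → α}
    (ht : Injective t) (hrange : Set.range t ⊆ Set.range b) :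
    ∃ π : Equiv.Perm (Fin n), t = b ∘ π := by
  choose τ hτ using fun j => hrange ⟨j, rfl⟩
  have hτ_inj : Injective τ := fun i j hij => ht (by rw [← hτ i, ← hτ j, hij])
  exact ⟨Equiv.ofBijective τ (Finite.injective_iff_bijective.1 hτ_inj),
    funext fun j => (hτ j).symm⟩

section Clones

variable {k h : ℕ}

theorem isClone_pol1 (ρ : Set (Fin h → Fin k)) : IsClone k (Pol1 ρ) where
  proj _ i _ ha := ha i
  comp _ _ _ f hg hf a ha := hg (fun j i => f i (a j)) fun i => hf i a ha

theorem IsClone.inter {C D : Set (Op k)} (hC : IsClone k C) (hD : IsClone k D) :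
    IsClone k (C ∩ D) where
  proj n i := ⟨hC.proj n i, hD.proj n i⟩
  comp n m g f hg hf :=
    ⟨hC.comp n m g f hg.1 fun i => (hf i).1, hD.comp n m g f hg.2 fun i => (hf i).2⟩

theorem pol2_subset_pol2_inter (ρ σ : Set (Fin h → Fin k)) :
    Pol2 ρ σ ⊆ Pol2 ρ (ρ ∩ σ) :=
  fun _ hf => ⟨hf.1, fun a ha => ⟨hf.1 a fun i => (ha i).1, hf.2 a fun i => (ha i).2⟩⟩

def unaryOp (f : Fin k → Fin k) : Op k :=
  ⟨1, fun x => f (x 0)⟩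

theorem unaryOp_mem_pol1_iff {f : Fin k → Fin k} {ρ : Set (Fin h → Fin k)} :
    unaryOp f ∈ Pol1 ρ ↔ ∀ t ∈ ρ, f ∘ t ∈ ρ :=
  ⟨fun hf t ht => hf (fun j _ => t j) fun _ => ht, fun hf _ ha => hf _ (ha (0 : Fin 1))⟩

end Clones

section UnaryPolymorphisms

variable {k h : ℕ} {ρ σ : Set (Fin h → Fin k)}

theorem update_id_comp_mem (hsym : TotallySymmetric ρ) {c : Fin k} (hc : c ∈ Center ρ)
    (a : Fin k) : ∀ t ∈ ρ, update id a c ∘ t ∈ ρ := by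
  intro t ht
  by_cases ha : ∃ m, t m = a
  · obtain ⟨m, hm⟩ := ha
    exact hsym.mem_of_apply_mem_center m (by simpa [hm] using hc)
  · push Not at ha
    have hfix : update id a c ∘ t = t := funext fun j => by simp [ha j]
    rwa [hfix]

theorem mem_center_of_update_id_comp_mem (hsym : TotallySymmetric σ) {a : Fin k}
    (ha : a ∈ Center σ) (c : Fin k) (hmaps : ∀ t ∈ σ, update id a c ∘ t ∈ σ) :
    c ∈ Center σ := by
  intro x hx
  by_cases hxa : ∃ j, x j = a
  · obtain ⟨j, hj⟩ := hxa
    exact hsym.mem_of_apply_mem_center j (hj ▸ ha)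
  · push Not at hxa
    -- `x` is the image of the tuple that has `a` in place of `c` at coordinate `0`.
    let y : Fin h → Fin k := fun j => if (j : ℕ) = 0 then a else x j
    have hy : y ∈ σ := ha y fun j hj => if_pos hj
    have hxy : update id a c ∘ y = x := funext fun j => by
      by_cases hj : (j : ℕ) = 0
      · simp [y, hj, hx j hj]
      · simp [y, hj, hxa j]
    exact hxy ▸ hmaps y hy

theorem update_id_comp_mem_inter (hρ : TotallySymmetric ρ) (hσ : TotallySymmetric σ)
    {c a : Fin k} (hc : c ∈ Center ρ) (ha : a ∈ Center σ)
    (hγ : gammaOne (ρ ∩ σ) ∩ ρ ⊆ ρ ∩ σ) :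
    ∀ t ∈ ρ ∩ σ, update id a c ∘ t ∈ ρ ∩ σ := by
  intro t ht
  by_cases hta : ∃ m, t m = a
  swap
  · push Not at hta
    have hfix : update id a c ∘ t = t := funext fun j => by simp [hta j]
    rwa [hfix]
  obtain ⟨m, hm⟩ := hta
  set t' := update id a c ∘ t
  have ht'm : t' m = c := by simp [t', hm]
  refine hγ ⟨⟨a, fun i => ⟨?_, hσ.mem_of_apply_mem_center i (by rwa [update_self])⟩⟩,
    hρ.mem_of_apply_mem_center m (ht'm ▸ hc)⟩
  by_cases hj : ∃ j, j ≠ i ∧ t j = a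
  · obtain ⟨j, hji, hj⟩ := hj
    exact hρ.mem_of_apply_mem_center j (by simpa [update_of_ne hji, t', hj] using hc)
  · push Not at hj
    have hmi : m = i := by_contra fun hmi => hj m hmi hm
    have hback : update t' i a = t := funext fun j => by
      by_cases hji : j = i
      · subst hji hmi; simp [hm]
      · simp [update_of_ne hji, t', hj j hji]
    exact hback ▸ ht.1

theorem extend_comp_mem (hrefl : TotallyReflexive ρ) (hsym : TotallySymmetric ρ)
    {c : Fin k} (hc : c ∈ Center ρ) {b x : Fin h → Fin k} (hb : Injective b) (hx : x ∈ ρ) :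
    ∀ t ∈ ρ, extend b x (fun _ => c) ∘ t ∈ ρ := by
  intro t ht
  by_cases ht_inj : Injective t
  swap
  · simp only [Injective, not_forall] at ht_inj
    obtain ⟨i, j, hij, hne⟩ := ht_inj
    exact hrefl _ ⟨i, j, hne, congrArg (extend b x fun _ => c) hij⟩
  by_cases hrange : Set.range t ⊆ Set.range b
  · obtain ⟨π, rfl⟩ := exists_perm_eq_comp_of_range_subset ht_inj hrange
    rw [← comp_assoc, extend_comp hb]
    exact hsym x hx π
  · obtain ⟨_, ⟨j, rfl⟩, hj⟩ := Set.not_subset.1 hrange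
    refine hsym.mem_of_apply_mem_center j ?_
    rwa [comp_apply, extend_apply' _ _ _ fun ⟨i, hi⟩ => hj ⟨i, hi⟩]

end UnaryPolymorphisms

section Maximality

variable {k h : ℕ} {ρ σ : Set (Fin h → Fin k)}

theorem pol2_ssubset_pol2_inter (hρ : TotallySymmetric ρ) (hσ : TotallySymmetric σ)
    {c a : Fin k} (hc : c ∈ Center ρ) (ha : a ∈ Center σ) (hcσ : c ∉ Center σ)
    (hγ : gammaOne (ρ ∩ σ) ∩ ρ ⊆ ρ ∩ σ) :
    Pol2 ρ σ ⊂ Pol2 ρ (ρ ∩ σ) := by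
  have hρ' : unaryOp (update id a c) ∈ Pol1 ρ :=
    unaryOp_mem_pol1_iff.2 (update_id_comp_mem hρ hc a)
  have hγ' : unaryOp (update id a c) ∈ Pol1 (ρ ∩ σ) :=
    unaryOp_mem_pol1_iff.2 (update_id_comp_mem_inter hρ hσ hc ha hγ)
  have hσ' : unaryOp (update id a c) ∉ Pol1 σ := fun hf =>
    hcσ (mem_center_of_update_id_comp_mem hσ ha c (unaryOp_mem_pol1_iff.1 hf))
  exact (Set.ssubset_iff_of_subset (pol2_subset_pol2_inter ρ σ)).2
    ⟨_, Set.mem_inter hρ' hγ', fun hf => hσ' hf.2⟩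

theorem pol2_inter_ssubset_pol1 (hh : 2 ≤ h) (hρrefl : TotallyReflexive ρ)
    (hρsym : TotallySymmetric ρ) (hσrefl : TotallyReflexive σ) (hσsym : TotallySymmetric σ)
    {c a : Fin k} (hc : c ∈ Center ρ) (ha : a ∈ Center σ)
    {x : Fin h → Fin k} (hxρ : x ∈ ρ) (hxσ : x ∉ σ) :
    Pol2 ρ (ρ ∩ σ) ⊂ Pol1 ρ := by
  have hhk : h ≤ k := by
    simpa using Fintype.card_le_of_injective x (hσrefl.injective_of_notMem hxσ)
  obtain ⟨b, hb, hcab⟩ := exists_injective_fin_of_card_le {c, a}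
    (Finset.card_le_two.trans hh) (by simpa using hhk)
  have hbγ : b ∈ ρ ∩ σ := by
    obtain ⟨i, hi⟩ := hcab c (by simp)
    obtain ⟨j, hj⟩ := hcab a (by simp)
    exact ⟨hρsym.mem_of_apply_mem_center i (hi ▸ hc), hσsym.mem_of_apply_mem_center j (hj ▸ ha)⟩
  let g : Fin k → Fin k := extend b x fun _ => c
  refine (Set.ssubset_iff_of_subset Set.inter_subset_left).2 ⟨unaryOp g,
    unaryOp_mem_pol1_iff.2 (extend_comp_mem hρrefl hρsym hc hb hxρ), fun hg => hxσ ?_⟩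
  have := (unaryOp_mem_pol1_iff.1 hg.2 b hbγ).2
  rwa [extend_comp hb] at this

end Maximality

theorem gamma_ne_gamma1_inter_rho_general {k h : ℕ} (hh : 2 ≤ h)
    (ρ σ : Set (Fin h → Fin k))
    (hρ : IsCentralRel ρ) (hσ : IsCentralRel σ)
    (h1 : ρ ∩ σ ≠ ρ)
    (hmax : MaximalIn (Pol2 ρ σ) (Pol1 ρ)) :
    ρ ∩ σ ≠
      {x : Fin h → Fin k |
        ∃ u : Fin k, ∀ i : Fin h, Function.update x i u ∈ ρ ∩ σ} ∩ ρ := by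
  change ρ ∩ σ ≠ gammaOne (ρ ∩ σ) ∩ ρ
  intro hγ
  obtain ⟨hρrefl, hρsym, ⟨c, hc⟩, -⟩ := hρ
  obtain ⟨hσrefl, hσsym, ⟨a, ha⟩, -⟩ := hσ
  by_cases hcσ : c ∈ Center σ
  · have hγ₁ : gammaOne (ρ ∩ σ) = Set.univ :=
      gammaOne_eq_univ (hρsym.inter hσsym) (c := c) (by rw [center_inter]; exact ⟨hc, hcσ⟩)
    exact h1 (by rwa [hγ₁, Set.univ_inter] at hγ)
  obtain ⟨x, hxρ, hxσ⟩ := Set.not_subset.1 (mt Set.inter_eq_left.2 h1)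
  exact hmax.2 _ ((isClone_pol1 ρ).inter (isClone_pol1 (ρ ∩ σ)))
    ⟨pol2_ssubset_pol2_inter hρsym hσsym hc ha hcσ hγ.ge,
      pol2_inter_ssubset_pol1 hh hρrefl hρsym hσrefl hσsym hc ha hxρ hxσ⟩

/-- Lemma 15 — `γ ≠ γ₁ ∩ ρ`. -/
theorem gamma_ne_gamma1_inter_rho {k h : ℕ} (hk : 3 ≤ k) (hh : 2 ≤ h)
    (ρ σ : Set (Fin h → Fin k))
    (hρ : IsCentralRel ρ) (hσ : IsCentralRel σ) (hne : ρ ≠ σ)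
    (h1 : ρ ∩ σ ≠ ρ) (h2 : ρ ∩ σ ≠ σ)
    (hmax : MaximalIn (Pol2 ρ σ) (Pol1 ρ)) :
    ρ ∩ σ ≠
      {x : Fin h → Fin k |
        ∃ u : Fin k, ∀ i : Fin h, Function.update x i u ∈ ρ ∩ σ} ∩ ρ :=
  gamma_ne_gamma1_inter_rho_general hh ρ σ hρ hσ h1 hmax
end

section
/- Let k ≥ 3, let ρ and σ be two distinct h-ary central relations on E_k (h ≥ 2) with ρ ∩ σ ∉ {ρ, σ}. Let γ = ρ ∩ σ and γ₁ = {(x_1,…,x_h) ∈ E_k^h : ∃u ∈ E_k such that (x_1,…,x_{i−1},u,x_{i+1},…,x_h) ∈ γ for all 1 ≤ i ≤ h}. If Pol{ρ,σ} is maximal in Pol ρ, then it is not the case that γ ⊊ γ₁ ∩ ρ. -/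
noncomputable def Fmap {k h : ℕ} (t b : Fin h → Fin k) (u₀ : Fin k) (x : Fin k) : Fin k :=
  if hx : ∃ j, t j = x then b hx.choose else u₀

lemma Fmap_apply_t {k h : ℕ} {t b : Fin h → Fin k} {u₀ : Fin k}
    (ht : Function.Injective t) (j : Fin h) : Fmap t b u₀ (t j) = b j := by
  have hx : ∃ j', t j' = t j := ⟨j, rfl⟩
  unfold Fmap
  rw [dif_pos hx]
  exact congrArg b (ht hx.choose_spec)

lemma Fmap_cases {k h : ℕ} (t b : Fin h → Fin k) (u₀ x : Fin k) :
    Fmap t b u₀ x = u₀ ∨ ∃ j, t j = x ∧ Fmap t b u₀ x = b j := by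
  unfold Fmap
  split_ifs with hx
  · exact Or.inr ⟨hx.choose, hx.choose_spec, rfl⟩
  · exact Or.inl rfl

lemma exists_perm_of_range_subset {h k : ℕ} {o c : Fin h → Fin k}
    (ho : Function.Injective o) (hr : ∀ m, ∃ j, c j = o m) :
    ∃ π : Equiv.Perm (Fin h), ∀ m, o m = c (π m) := by
  choose π hπ using hr
  have hinj : Function.Injective π := fun m m' hmm => ho (by rw [← hπ m, ← hπ m', hmm])
  exact ⟨Equiv.ofBijective π (Finite.injective_iff_bijective.mp hinj), fun m => (hπ m).symm⟩

lemma Fmap_inj_cases {k h : ℕ} {t b : Fin h → Fin k} {u₀ : Fin k}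
    (hb : Function.Injective b) (hu : u₀ ∉ Set.range b) (s : Fin h → Fin k)
    (ho : Function.Injective fun j => Fmap t b u₀ (s j)) :
    (∃ π : Equiv.Perm (Fin h), (∀ j, Fmap t b u₀ (s j) = b (π j)) ∧ ∀ j, s j = t (π j)) ∨
    ∃ i, ∃ π : Equiv.Perm (Fin h), ∀ j, Fmap t b u₀ (s j) = Function.update b i u₀ (π j) := by
  set o : Fin h → Fin k := fun j => Fmap t b u₀ (s j) with ho_def
  by_cases hmem : ∃ m, o m = u₀
  · right
    obtain ⟨m₀, hm₀⟩ := hmem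
    have hstar : ∃ i, ∀ m, o m ≠ b i := by
      by_contra hcon
      push_neg at hcon
      choose ψ hψ using hcon
      have hinj : Function.Injective ψ := fun i i' hii => hb (by rw [← hψ i, ← hψ i', hii])
      obtain ⟨i, hi⟩ := (Finite.injective_iff_surjective.mp hinj) m₀
      exact hu ⟨i, by rw [← hψ i, hi, hm₀]⟩
    obtain ⟨i, hi⟩ := hstar
    have hr : ∀ m, ∃ j, Function.update b i u₀ j = o m := by
      intro m
      rcases Fmap_cases t b u₀ (s m) with hc | ⟨j, _, hc⟩
      · exact ⟨i, by rw [Function.update_self]; exact hc.symm⟩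
      · have hji : j ≠ i := fun e => hi m (show o m = b i from hc.trans (congrArg b e))
        exact ⟨j, by rw [Function.update_of_ne hji]; exact hc.symm⟩
    obtain ⟨π, hπ⟩ := exists_perm_of_range_subset ho hr
    exact ⟨i, π, hπ⟩
  · left
    push_neg at hmem
    have hr : ∀ m, ∃ j, t j = s m ∧ o m = b j := by
      intro m
      rcases Fmap_cases t b u₀ (s m) with hc | ⟨j, hj, hc⟩
      · exact absurd hc (hmem m)
      · exact ⟨j, hj, hc⟩
    choose π hπ1 hπ2 using hr
    have hinj : Function.Injective π := fun m m' hmm =>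
      ho (show o m = o m' by rw [hπ2 m, hπ2 m', hmm])
    exact ⟨Equiv.ofBijective π (Finite.injective_iff_bijective.mp hinj),
      fun j => hπ2 j, fun j => (hπ1 j).symm⟩

lemma Fmap_preserves {k h : ℕ} {ρ' : Set (Fin h → Fin k)}
    (hr : TotallyReflexive ρ') (hsym : TotallySymmetric ρ')
    {t b : Fin h → Fin k} {u₀ : Fin k}
    (hb : Function.Injective b) (hu : u₀ ∉ Set.range b)
    (hupd : ∀ i, Function.update b i u₀ ∈ ρ')
    (hperm : ∀ π : Equiv.Perm (Fin h), (t ∘ π) ∈ ρ' → (b ∘ π) ∈ ρ')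
    (s : Fin h → Fin k) (hs : s ∈ ρ') :
    (fun j => Fmap t b u₀ (s j)) ∈ ρ' := by
  by_cases ho : Function.Injective (fun j => Fmap t b u₀ (s j))
  · rcases Fmap_inj_cases hb hu s ho with ⟨π, hA, hB⟩ | ⟨i, π, hA⟩
    · have hts : t ∘ π = s := funext fun j => (hB j).symm
      have hbπ : b ∘ π ∈ ρ' := hperm π (by rw [hts]; exact hs)
      have he : (fun j => Fmap t b u₀ (s j)) = b ∘ π := funext fun j => hA j
      rw [he]; exact hbπ
    · have hm : Function.update b i u₀ ∘ π ∈ ρ' := hsym _ (hupd i) π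
      have he : (fun j => Fmap t b u₀ (s j)) = Function.update b i u₀ ∘ π :=
        funext fun j => hA j
      rw [he]; exact hm
  · apply hr
    rw [Function.not_injective_iff] at ho
    obtain ⟨i, j, hij, hne⟩ := ho
    exact ⟨i, j, hne, hij⟩

/-- Lemma 16 — `γ ⊊ γ₁ ∩ ρ` is impossible. -/
theorem not_gamma_ssub_gamma1_inter_rho {k h : ℕ} (hk : 3 ≤ k) (hh : 2 ≤ h)
    (ρ σ : Set (Fin h → Fin k))
    (hρ : IsCentralRel ρ) (hσ : IsCentralRel σ) (hne : ρ ≠ σ)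
    (h1 : ρ ∩ σ ≠ ρ) (h2 : ρ ∩ σ ≠ σ)
    (hmax : MaximalIn (Pol2 ρ σ) (Pol1 ρ)) :
    ¬ (ρ ∩ σ ⊂
        {x : Fin h → Fin k |
          ∃ u : Fin k, ∀ i : Fin h, Function.update x i u ∈ ρ ∩ σ} ∩ ρ) := by
  intro hss
  obtain ⟨b, hbmem, hbγ⟩ := Set.exists_of_ssubset hss
  obtain ⟨⟨u₀, hupd⟩, hbρ⟩ := hbmem
  have hbσ : b ∉ σ := fun hb => hbγ ⟨hbρ, hb⟩
  have hbinj : Function.Injective b := by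
    intro i j hij
    by_contra hne'
    exact hbσ (hσ.1 b ⟨i, j, hne', hij⟩)
  have hu₀ : u₀ ∉ Set.range b := by
    rintro ⟨j, rfl⟩
    have := hupd j
    rw [Function.update_eq_self] at this
    exact hbσ this.2
  -- w ∈ σ \ ρ
  have hns : ¬ σ ⊆ ρ ∩ σ := fun hsub => h2 (Set.Subset.antisymm Set.inter_subset_right hsub)
  obtain ⟨w, hwσ, hwn⟩ := Set.not_subset.mp hns
  have hwρ : w ∉ ρ := fun hw => hwn ⟨hw, hwσ⟩
  have hwinj : Function.Injective w := by
    intro i j hij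
    by_contra hne'
    exact hwρ (hρ.1 w ⟨i, j, hne', hij⟩)
  -- the tuple t = update b 0 u₀ ∈ γ, injective
  have hpos : 0 < h := by omega
  set i0 : Fin h := ⟨0, hpos⟩ with hi0
  set t : Fin h → Fin k := Function.update b i0 u₀ with ht
  have htγ : t ∈ ρ ∩ σ := hupd i0
  have htinj : Function.Injective t := by
    intro i j hij
    rcases eq_or_ne i i0 with rfl | hi <;> rcases eq_or_ne j i0 with rfl | hj
    · rfl
    · rw [ht, Function.update_self, Function.update_of_ne hj] at hij
      exact absurd ⟨j, hij.symm⟩ hu₀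
    · rw [ht, Function.update_self, Function.update_of_ne hi] at hij
      exact absurd ⟨i, hij⟩ hu₀
    · rw [ht, Function.update_of_ne hi, Function.update_of_ne hj] at hij
      exact hbinj hij
  -- symmetry/reflexivity of γ
  have hγr : TotallyReflexive (ρ ∩ σ) := fun a ha => ⟨hρ.1 a ha, hσ.1 a ha⟩
  have hγs : TotallySymmetric (ρ ∩ σ) := fun a ha π => ⟨hρ.2.1 a ha.1 π, hσ.2.1 a ha.2 π⟩
  -- the intermediate clone
  have hE : IsClone k (Pol2 ρ (ρ ∩ σ)) := by
    constructor
    · intro n i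
      exact ⟨fun a ha => ha i, fun a ha => ha i⟩
    · intro n m g f hg hf
      exact ⟨fun a ha => hg.1 (fun j i => f i (a j)) (fun i => (hf i).1 a ha),
             fun a ha => hg.2 (fun j i => f i (a j)) (fun i => (hf i).2 a ha)⟩
  have hCE : Pol2 ρ σ ⊆ Pol2 ρ (ρ ∩ σ) := by
    rintro ⟨n, f⟩ ⟨hfρ, hfσ⟩
    exact ⟨hfρ, fun a ha => ⟨hfρ a (fun i => (ha i).1), hfσ a (fun i => (ha i).2)⟩⟩
  have hED : Pol2 ρ (ρ ∩ σ) ⊆ Pol1 ρ := fun f hf => hf.1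
  have hmax2 := hmax.2 (Pol2 ρ (ρ ∩ σ)) hE
  rcases eq_or_ne (Pol2 ρ σ) (Pol2 ρ (ρ ∩ σ)) with hCEeq | hCEne
  · -- case C = E : the operation g built from w violates σ-preservation
    have hgρ : (⟨1, fun x => Fmap w b u₀ (x 0)⟩ : Op k) ∈ Pol1 ρ := by
      intro a ha
      exact Fmap_preserves hρ.1 hρ.2.1 hbinj hu₀ (fun i => (hupd i).1)
        (fun π hwπ => by
          exfalso
          have hw : (w ∘ ⇑π) ∘ ⇑π.symm ∈ ρ := hρ.2.1 _ hwπ π.symm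
          have he : (w ∘ ⇑π) ∘ ⇑π.symm = w := funext fun i => congrArg w (π.apply_symm_apply i)
          rw [he] at hw
          exact hwρ hw)
        (fun j => a j 0) (ha 0)
    have hgγ : (⟨1, fun x => Fmap w b u₀ (x 0)⟩ : Op k) ∈ Pol1 (ρ ∩ σ) := by
      intro a ha
      exact Fmap_preserves hγr hγs hbinj hu₀ hupd
        (fun π hwπ => by
          exfalso
          have hw : (w ∘ ⇑π) ∘ ⇑π.symm ∈ ρ := hρ.2.1 _ hwπ.1 π.symm
          have he : (w ∘ ⇑π) ∘ ⇑π.symm = w := funext fun i => congrArg w (π.apply_symm_apply i)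
          rw [he] at hw
          exact hwρ hw)
        (fun j => a j 0) (ha 0)
    have hgC : (⟨1, fun x => Fmap w b u₀ (x 0)⟩ : Op k) ∈ Pol2 ρ σ := by
      rw [hCEeq]
      exact ⟨hgρ, hgγ⟩
    have hgσ : (⟨1, fun x => Fmap w b u₀ (x 0)⟩ : Op k) ∈ Pol1 σ := hgC.2
    have hout : (fun j => Fmap w b u₀ (w j)) ∈ σ :=
      hgσ (fun j _ => w j) (fun _ => hwσ)
    have hb' : (fun j => Fmap w b u₀ (w j)) = b := funext fun j => Fmap_apply_t hwinj j
    rw [hb'] at hout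
    exact hbσ hout
  · rcases eq_or_ne (Pol2 ρ (ρ ∩ σ)) (Pol1 ρ) with hEDeq | hEDne
    · -- case E = D : the operation f built from t violates γ-preservation
      have hfρ : (⟨1, fun x => Fmap t b u₀ (x 0)⟩ : Op k) ∈ Pol1 ρ := by
        intro a ha
        exact Fmap_preserves hρ.1 hρ.2.1 hbinj hu₀ (fun i => (hupd i).1)
          (fun π _ => hρ.2.1 b hbρ π) (fun j => a j 0) (ha 0)
      have hfE : (⟨1, fun x => Fmap t b u₀ (x 0)⟩ : Op k) ∈ Pol2 ρ (ρ ∩ σ) := by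
        rw [hEDeq]
        exact hfρ
      have hout : (fun j => Fmap t b u₀ (t j)) ∈ ρ ∩ σ :=
        hfE.2 (fun j _ => t j) (fun _ => htγ)
      have hb' : (fun j => Fmap t b u₀ (t j)) = b := funext fun j => Fmap_apply_t htinj j
      rw [hb'] at hout
      exact hbγ hout
    · exact hmax2 ⟨Set.ssubset_iff_subset_ne.mpr ⟨hCE, hCEne⟩,
        Set.ssubset_iff_subset_ne.mpr ⟨hED, hEDne⟩⟩
end
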